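/- arXiv:2503.18298 — 5 statements merged into one kernel-verified Lean document; each statement's English description precedes it below -/
import Mathlib

section
/- Let W_n be the orientation of the wheel graph containing a directed n-cycle together with a central vertex v adjacent to all cycle vertices, with vertex coloring c. Then W_n has an up-color kernel if and only if either (1) v absorbs every other vertex with greater color (i.e., every cycle vertex u has an arc to v and c(u) < c(v)) and c(v) > 0, or (2) n is even, v has an out-neighbor w with c(v) < c(w), and some up-color kernel K of W_n minus v contains w. -/
def UpColorKernel {V : Type*} (A : V → V → Prop) (c : V → ℕ) (K : Set V) : Prop :=
  (∀ v ∈ K, ∀ w ∈ K, ¬ A v w) ∧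
  (∀ v ∈ K, c v ≠ 0) ∧
  (∀ v, v ∉ K → ∃ w ∈ K, A v w ∧ c v < c w)

/-- The orientation of the wheel: rim is the directed cycle on `ZMod n` (arcs `(x_{i+1}, x_i)`),
the hub is `none`, and spoke `i` is oriented toward the hub iff `s i = true`. -/
def wheelArc (n : ℕ) (s : ZMod n → Bool) :
    Option (ZMod n) → Option (ZMod n) → Prop
  | some i, some j => i = j + 1
  | some i, none => s i = true
  | none, some i => s i = false
  | none, none => False

/-- `W_n` has an up-color kernel iff either the hub `v` absorbs every rim vertex with greater
color and has positive color, or `n` is even, the hub is up-color absorbed by some rim vertex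
`w`, and `w` lies in an up-color kernel of the rim cycle `W_n ∖ {v}`. -/
theorem wheel_upColorKernel_iff (n : ℕ) (hn : 3 ≤ n) (s : ZMod n → Bool)
    (c : Option (ZMod n) → ℕ) :
    (∃ K : Set (Option (ZMod n)), UpColorKernel (wheelArc n s) c K) ↔
    (((∀ i : ZMod n, wheelArc n s (some i) none ∧ c (some i) < c none) ∧ 0 < c none) ∨
     (Even n ∧ ∃ j : ZMod n, wheelArc n s none (some j) ∧ c none < c (some j) ∧
        ∃ K : Set (ZMod n),
          UpColorKernel (fun i j' : ZMod n => i = j' + 1) (fun i => c (some i)) K ∧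
          j ∈ K)) := by
  classical
  constructor
  · rintro ⟨K, hInd, hCol, hAbs⟩
    by_cases hv : none ∈ K
    · -- hub is in the kernel: no rim vertex can be (spoke one way or another)
      left
      have hrim : ∀ i : ZMod n, some i ∉ K := by
        intro i hi
        cases h : s i with
        | false => exact hInd none hv (some i) hi h
        | true => exact hInd (some i) hi none hv h
      refine ⟨fun i => ?_, Nat.pos_of_ne_zero (hCol none hv)⟩
      obtain ⟨w, hwK, harc, hlt⟩ := hAbs (some i) (hrim i)
      cases w with
      | none => exact ⟨harc, hlt⟩
      | some j => exact absurd hwK (hrim j)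
    · right
      obtain ⟨w, hwK, harc, hlt⟩ := hAbs none hv
      cases w with
      | none => exact absurd hwK hv
      | some j =>
        set K' : Set (ZMod n) := {i | some i ∈ K} with hK'def
        have hK' : UpColorKernel (fun i j' : ZMod n => i = j' + 1)
            (fun i => c (some i)) K' := by
          refine ⟨fun i hi j' hj' h => hInd (some i) hi (some j') hj' h,
            fun i hi => hCol (some i) hi, fun i hi => ?_⟩
          obtain ⟨w, hwK, harc, hlt'⟩ := hAbs (some i) hi
          cases w with
          | none => exact absurd hwK hv
          | some j' => exact ⟨j', hwK, harc, hlt'⟩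
        have alt : ∀ i : ZMod n, i ∈ K' ↔ (i + 1) ∉ K' := by
          intro i
          constructor
          · intro hi hi1
            exact hK'.1 (i + 1) hi1 i hi rfl
          · intro h1
            obtain ⟨w, hw, harc2, _⟩ := hK'.2.2 (i + 1) h1
            have hwi : i = w := add_right_cancel harc2
            rwa [hwi]
        have hp : ∀ k : ℕ, ((k : ZMod n) ∈ K') ↔ (Even k ↔ ((0 : ZMod n) ∈ K')) := by
          intro k
          induction k with
          | zero => simp
          | succ k ih =>
            have h1 := alt (k : ZMod n)
            have h2 : (((k : ℕ) : ZMod n) + 1 ∈ K') ↔ ¬ ((k : ZMod n) ∈ K') := by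
              tauto
            have h3 : (((k + 1 : ℕ) : ZMod n) ∈ K') ↔ ¬ ((k : ZMod n) ∈ K') := by
              push_cast
              exact h2
            rw [h3, ih, Nat.even_add_one]
            tauto
        have heven : Even n := by
          by_contra hodd
          have := hp n
          rw [ZMod.natCast_self] at this
          tauto
        exact ⟨heven, j, harc, hlt, K', hK', hwK⟩
  · rintro (⟨habs, hpos⟩ | ⟨hev, j, hsj, hlt, K', hK', hjK'⟩)
    · refine ⟨{none}, ?_, ?_, ?_⟩
      · intro v hv w hw
        simp only [Set.mem_singleton_iff] at hv hw
        subst hv; subst hw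
        exact id
      · intro v hv
        simp only [Set.mem_singleton_iff] at hv
        subst hv
        exact hpos.ne'
      · intro v hv
        cases v with
        | none => exact absurd rfl hv
        | some i => exact ⟨none, rfl, (habs i).1, (habs i).2⟩
    · refine ⟨Option.some '' K', ?_, ?_, ?_⟩
      · rintro _ ⟨i, hi, rfl⟩ _ ⟨j', hj', rfl⟩
        exact hK'.1 i hi j' hj'
      · rintro _ ⟨i, hi, rfl⟩
        exact hK'.2.1 i hi
      · intro v hv
        cases v with
        | none => exact ⟨some j, ⟨j, hjK', rfl⟩, hsj, hlt⟩
        | some i =>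
          have hi : i ∉ K' := fun h => hv ⟨i, h, rfl⟩
          obtain ⟨w, hw, harc, hlt'⟩ := hK'.2.2 i hi
          exact ⟨some w, ⟨w, hw, rfl⟩, harc, hlt'⟩
end

section
/- Let G be obtained from a directed odd cycle C by adding a pendant vertex v and the arc (w,v) for some w ∈ V(C), with vertex coloring c. Then G has an up-color kernel if and only if c(v) > c(w) and c(v) > 0 and the directed path C \ {w} has an up-color kernel. -/
/-- An odd directed cycle on `ZMod (2k+1)` (arcs `(x_{i+1}, x_i)`) together with a
pendant vertex `none` and the pendant arc `(w, v)`. -/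
def cyclePendantArc (k : ℕ) (w : ZMod (2 * k + 1)) :
    Option (ZMod (2 * k + 1)) → Option (ZMod (2 * k + 1)) → Prop
  | some i, some j => i = j + 1
  | some i, none => i = w
  | none, _ => False

/-- `G`, an odd cycle with an outward pendant arc `(w, v)`, has an up-color kernel iff
`c v > c w`, `c v > 0`, and the directed path `C ∖ {w}` has an up-color kernel. -/
theorem oddCyclePendant_upColorKernel_iff (k : ℕ) (w : ZMod (2 * k + 1))
    (c : Option (ZMod (2 * k + 1)) → ℕ) :
    (∃ K : Set (Option (ZMod (2 * k + 1))), UpColorKernel (cyclePendantArc k w) c K) ↔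
    (c (some w) < c none ∧ 0 < c none ∧
      ∃ K : Set {i : ZMod (2 * k + 1) // i ≠ w},
        UpColorKernel (fun i j : {i : ZMod (2 * k + 1) // i ≠ w} => i.1 = j.1 + 1)
          (fun i => c (some i.1)) K) := by
  constructor
  · rintro ⟨K, hind, hcol, hdom⟩
    have hnone : none ∈ K := by
      by_contra h
      obtain ⟨x, hx, hA, _⟩ := hdom none h
      exact hA
    have hw : some w ∉ K := fun h => hind (some w) h none hnone rfl
    have hcw : c (some w) < c none := by
      by_contra hcw
      push_neg at hcw
      -- step lemma: membership propagates by 2 around the cycle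
      have hstep : ∀ i : ZMod (2 * k + 1), some i ∈ K → some (i + 2) ∈ K := by
        intro i hi
        by_contra h2
        obtain ⟨x, hx, hA, hc⟩ := hdom (some (i + 2)) h2
        match x, hx, hA, hc with
        | some j, hx, hA, hc =>
          have hj : j = i + 1 := by
            have : i + 2 = j + 1 := hA
            have := add_right_cancel (show i + 1 + 1 = j + 1 by rw [← this]; ring)
            exact this.symm
          subst hj
          exact hind (some (i + 1)) hx (some i) hi (by show i + 1 = i + 1; rfl)
        | none, hx, hA, hc =>
          have hA' : i + 2 = w := hA
          rw [hA'] at hc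
          exact absurd hc (not_lt.mpr hcw)
      have hw1 : some (w - 1) ∈ K := by
        obtain ⟨x, hx, hA, hc⟩ := hdom (some w) hw
        match x, hx, hA, hc with
        | some j, hx, hA, hc =>
          have hj : j = w - 1 := by
            have : w = j + 1 := hA
            rw [this]; ring
          rwa [← hj]
        | none, hx, hA, hc =>
          exact absurd hc (not_lt.mpr hcw)
      have hall : ∀ m : ℕ, some (w - 1 + 2 * (m : ZMod (2 * k + 1))) ∈ K := by
        intro m
        induction m with
        | zero => simpa using hw1
        | succ n ih =>
          have := hstep _ ih
          have heq : w - 1 + 2 * ((n : ZMod (2 * k + 1)) + 1) =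
              w - 1 + 2 * (n : ZMod (2 * k + 1)) + 2 := by ring
          push_cast
          rw [heq]
          exact this
      have hkey := hall (k + 1)
      have h2k : ((k : ZMod (2 * k + 1)) + 1) * 2 = 1 := by
        have : (((2 * k + 1 : ℕ) : ZMod (2 * k + 1)) + 1) = 1 := by
          rw [ZMod.natCast_self]; ring
        push_cast at this ⊢
        linear_combination this
      have heq : w - 1 + 2 * (((k + 1 : ℕ)) : ZMod (2 * k + 1)) = w := by
        push_cast
        linear_combination h2k
      rw [heq] at hkey
      exact hw hkey
    refine ⟨hcw, Nat.pos_of_ne_zero (hcol none hnone), {i | some i.1 ∈ K}, ?_, ?_, ?_⟩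
    · intro v hv u hu hA
      exact hind (some v.1) hv (some u.1) hu hA
    · intro v hv
      exact hcol (some v.1) hv
    · intro v hv
      obtain ⟨x, hx, hA, hc⟩ := hdom (some v.1) hv
      match x, hx, hA, hc with
      | some j, hx, hA, hc =>
        have hj : j ≠ w := fun h => hw (h ▸ hx)
        exact ⟨⟨j, hj⟩, hx, hA, hc⟩
      | none, hx, hA, hc =>
        exact absurd hA v.2
  · rintro ⟨hcw, hc0, K', hind, hcol, hdom⟩
    refine ⟨{x | x = none ∨ ∃ p ∈ K', x = some p.1}, ?_, ?_, ?_⟩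
    · rintro v (rfl | ⟨p, hp, rfl⟩) u hu hA
      · exact hA
      · rcases hu with rfl | ⟨q, hq, rfl⟩
        · exact p.2 hA
        · exact hind p hp q hq hA
    · rintro v (rfl | ⟨p, hp, rfl⟩)
      · omega
      · exact hcol p hp
    · intro v hv
      match v with
      | none => exact absurd (Or.inl rfl) hv
      | some i =>
        by_cases hiw : i = w
        · subst hiw
          exact ⟨none, Or.inl rfl, rfl, hcw⟩
        · have hi : (⟨i, hiw⟩ : {i : ZMod (2 * k + 1) // i ≠ w}) ∉ K' := by
            intro h
            exact hv (Or.inr ⟨⟨i, hiw⟩, h, rfl⟩)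
          obtain ⟨q, hq, hA, hc⟩ := hdom _ hi
          exact ⟨some q.1, Or.inr ⟨q, hq, rfl⟩, hA, hc⟩
end

section
/- Let C_{2n+1} be an odd directed cycle and H any family of 2n+1 pairwise disjoint c-colored digraphs. Then the Zykov sum C_{2n+1}[H] has no up-color kernel, for any coloring. -/
/-- The Zykov sum `C_{2n+1}[H]` of an odd directed cycle (vertices `ZMod (2n+1)`, arcs
`(i+1, i)`) with any family of pairwise disjoint nonempty digraphs has no up-color kernel,
for any coloring. -/
theorem zykovOddCycle_no_upColorKernel (n : ℕ) (V : ZMod (2 * n + 1) → Type*)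
    [∀ i, Nonempty (V i)]
    (A : ∀ i, V i → V i → Prop) (c : ∀ i, V i → ℕ) :
    ¬ ∃ K : Set (Σ i, V i),
      UpColorKernel
        (fun x y => (∃ h : x.1 = y.1, A y.1 (h ▸ x.2) y.2) ∨ x.1 = y.1 + 1)
        (fun x => c x.1 x.2) K := by
  rintro ⟨K, hindep, -, habs⟩
  set S : Set (ZMod (2 * n + 1)) := {i | ∃ v, (⟨i, v⟩ : Σ i, V i) ∈ K} with hS
  have step : ∀ i, i ∈ S ↔ (i + 1) ∉ S := by
    intro i
    constructor
    · rintro ⟨v, hv⟩ ⟨w, hw⟩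
      exact hindep ⟨i + 1, w⟩ hw ⟨i, v⟩ hv (Or.inr rfl)
    · intro h
      obtain ⟨w⟩ := ‹∀ i, Nonempty (V i)› (i + 1)
      have hwK : (⟨i + 1, w⟩ : Σ i, V i) ∉ K := fun hk => h ⟨w, hk⟩
      obtain ⟨u, huK, harc, -⟩ := habs _ hwK
      obtain ⟨j, u2⟩ := u
      rcases harc with ⟨h1, -⟩ | h1
      · simp only at h1
        subst h1
        exact absurd ⟨u2, huK⟩ h
      · simp only at h1
        have hji : j = i := by
          have h2 : j + 1 = i + 1 := h1.symm
          exact add_right_cancel h2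
        subst hji
        exact ⟨u2, huK⟩
  classical
  have g : ∀ m : ℕ, ((m + 1 : ℕ) : ZMod (2 * n + 1)) ∈ S ↔ ¬ ((m : ℕ) : ZMod (2 * n + 1)) ∈ S := by
    intro m
    have := step ((m : ℕ) : ZMod (2 * n + 1))
    push_cast
    tauto
  have key : ∀ m : ℕ, (((m : ℕ) : ZMod (2 * n + 1)) ∈ S ↔ ((0 : ℕ) : ZMod (2 * n + 1)) ∈ S) ↔ Even m := by
    intro m
    induction m with
    | zero => simp
    | succ k ih =>
      have := g k
      rw [Nat.even_add_one]
      tauto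
  have hodd := (key (2 * n + 1)).not.mpr (by simp [Nat.even_add_one, parity_simps])
  have hzero : ((2 * n + 1 : ℕ) : ZMod (2 * n + 1)) = ((0 : ℕ) : ZMod (2 * n + 1)) := by
    simp [ZMod.natCast_self]
  rw [hzero] at hodd
  exact hodd Iff.rfl
end

section
/- There exists a c-colored digraph D (namely the directed path x_1 → x_2 → x_3 → x_4 with colors 3, 2, 1, 4) that has no up-color kernel, while its line digraph L(D) with the outer coloration (a directed path with colors 2, 1, 4) has an up-color kernel. Hence the hypothesis on vertices of in-degree zero in the line-digraph bijection theorem cannot be dropped. -/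
/-- The directed path `x₁ → x₂ → x₃ → x₄` with colors `3, 2, 1, 4` has no up-color kernel,
yet its line digraph with the outer coloration (a directed path with colors `2, 1, 4`)
has one. Hence the in-degree-zero hypothesis of the line digraph theorem is necessary. -/
theorem lineDigraph_outer_counterexample :
    let c : Fin 4 → ℕ := ![3, 2, 1, 4]
    let A : Fin 4 → Fin 4 → Prop := fun i j => (j : ℕ) = (i : ℕ) + 1
    (¬ ∃ K : Set (Fin 4), UpColorKernel A c K) ∧
    (∃ H : Set {p : Fin 4 × Fin 4 // (p.2 : ℕ) = (p.1 : ℕ) + 1},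
      UpColorKernel
        (fun h k : {p : Fin 4 × Fin 4 // (p.2 : ℕ) = (p.1 : ℕ) + 1} => h.1.2 = k.1.1)
        (fun e => c e.1.2) H) := by
  intro c A
  have e0 : ((0 : Fin 4) : ℕ) = 0 := rfl
  have e1 : ((1 : Fin 4) : ℕ) = 1 := rfl
  have e2 : ((2 : Fin 4) : ℕ) = 2 := rfl
  have e3 : ((3 : Fin 4) : ℕ) = 3 := rfl
  constructor
  · rintro ⟨K, hind, -, hdom⟩
    have h3 : (3 : Fin 4) ∈ K := by
      by_contra h
      obtain ⟨w, hw, haw, -⟩ := hdom 3 h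
      fin_cases w <;> simp_all [A]
    have h2 : (2 : Fin 4) ∉ K := fun h => hind 2 h 3 h3 (by decide)
    have h1 : (1 : Fin 4) ∈ K := by
      by_contra h
      obtain ⟨w, hw, haw, -⟩ := hdom 1 h
      fin_cases w <;> simp_all [A]
    have h0 : (0 : Fin 4) ∈ K := by
      by_contra h
      obtain ⟨w, hw, haw, hlt⟩ := hdom 0 h
      fin_cases w <;> simp_all [A, c]
    exact hind 0 h0 1 h1 (by decide)
  · refine ⟨{e | e.1 = ((0 : Fin 4), (1 : Fin 4)) ∨ e.1 = ((2 : Fin 4), (3 : Fin 4))}, ?_, ?_, ?_⟩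
    · rintro ⟨⟨a, b⟩, hab⟩ hv ⟨⟨a', b'⟩, hab'⟩ hw h
      simp only [Set.mem_setOf_eq, Prod.mk.injEq] at hv hw h
      rcases hv with ⟨rfl, rfl⟩ | ⟨rfl, rfl⟩ <;> rcases hw with ⟨rfl, rfl⟩ | ⟨rfl, rfl⟩ <;>
        simp_all
    · rintro ⟨⟨a, b⟩, hab⟩ hv
      simp only [Set.mem_setOf_eq, Prod.mk.injEq] at hv
      rcases hv with ⟨rfl, rfl⟩ | ⟨rfl, rfl⟩ <;> simp [c]
    · rintro ⟨⟨a, b⟩, hab⟩ hv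
      simp only [Set.mem_setOf_eq, Prod.mk.injEq, not_or] at hv
      fin_cases a <;> fin_cases b <;> simp_all [c] <;> exact absurd hab (by decide)
end

section
/- There exists a c-colored digraph D (namely the directed path x_1 → x_2 → x_3 → x_4 with colors 2, 3, 1, 4) that has an up-color kernel, while its line digraph L(D) with the inner coloration (coloring each arc (u,v) by c(u), yielding a path with colors 2, 3, 1) has no up-color kernel. -/
/-- The directed path `x₁ → x₂ → x₃ → x₄` with colors `2, 3, 1, 4` has an up-color kernel,
yet its line digraph with the inner coloration (each arc `(u, v)` colored by `c u`, giving a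
directed path with colors `2, 3, 1`) has no up-color kernel. -/
theorem lineDigraph_inner_counterexample :
    let c : Fin 4 → ℕ := ![2, 3, 1, 4]
    let A : Fin 4 → Fin 4 → Prop := fun i j => (j : ℕ) = (i : ℕ) + 1
    (∃ K : Set (Fin 4), UpColorKernel A c K) ∧
    (¬ ∃ H : Set {p : Fin 4 × Fin 4 // (p.2 : ℕ) = (p.1 : ℕ) + 1},
      UpColorKernel
        (fun h k : {p : Fin 4 × Fin 4 // (p.2 : ℕ) = (p.1 : ℕ) + 1} => h.1.2 = k.1.1)
        (fun e => c e.1.1) H) := by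
  intro c A
  constructor
  · refine ⟨{1, 3}, ?_, ?_, ?_⟩
    · intro v hv w hw
      rcases hv with rfl | rfl <;> rcases hw with rfl | rfl <;> decide
    · intro v hv
      rcases hv with rfl | rfl <;> decide
    · intro v hv
      fin_cases v
      · exact ⟨1, Or.inl rfl, by decide, by decide⟩
      · exact absurd (Or.inl rfl) hv
      · exact ⟨3, Or.inr rfl, by decide, by decide⟩
      · exact absurd (Or.inr rfl) hv
  · rintro ⟨H, hind, -, hdom⟩
    set e2 : {p : Fin 4 × Fin 4 // (p.2 : ℕ) = (p.1 : ℕ) + 1} := ⟨(1, 2), rfl⟩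
    set e3 : {p : Fin 4 × Fin 4 // (p.2 : ℕ) = (p.1 : ℕ) + 1} := ⟨(2, 3), rfl⟩
    have he3 : e3 ∈ H := by
      by_contra h
      obtain ⟨w, -, hAw, -⟩ := hdom e3 h
      have h2 : (w.1.2 : ℕ) = (w.1.1 : ℕ) + 1 := w.2
      have : (w.1.1 : ℕ) = 3 := by
        have := congrArg (fun x : Fin 4 => (x : ℕ)) hAw
        simpa [e3] using this.symm
      have h4 := w.1.2.isLt
      omega
    have he2 : e2 ∈ H := by
      by_contra h
      obtain ⟨w, hwH, hAw, hlt⟩ := hdom e2 h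
      have hw1 : w.1.1 = (2 : Fin 4) := by simpa [e2] using hAw.symm
      simp only at hlt
      rw [hw1] at hlt
      simp [e2, c] at hlt
    exact hind e2 he2 e3 he3 rfl
end
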